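/- arXiv:1906.07581 — 5 statements merged into one kernel-verified Lean document; each statement's English description precedes it below -/
import Mathlib

section
/- Let Δ be a supersimple 2-(n,4,λ) design with points x and y. Then the hole stabilizers π_x(Δ) and π_y(Δ) are conjugate subgroups of Sym(Ω). -/
variable {Ω : Type*} [Fintype Ω] [DecidableEq Ω]

/-- `(Ω, B)` is a supersimple 2-(n,4,λ) design: `Ω` has `n` points, every line has 4
points, every pair of distinct points lies on exactly `lam` lines, and any two
distinct lines meet in at most 2 points. -/
def IsSupersimpleDesign (B : Finset (Finset Ω)) (n lam : ℕ) : Prop :=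
  Fintype.card Ω = n ∧
  (∀ L ∈ B, L.card = 4) ∧
  (∀ a b : Ω, a ≠ b → (B.filter fun L => a ∈ L ∧ b ∈ L).card = lam) ∧
  (∀ L₁ ∈ B, ∀ L₂ ∈ B, L₁ ≠ L₂ → (L₁ ∩ L₂).card ≤ 2)

/-- Two points are collinear if some line contains both. -/
def Collin (B : Finset (Finset Ω)) (x y : Ω) : Prop := ∃ L ∈ B, x ∈ L ∧ y ∈ L

/-- `em` is the family of elementary moves `[x,y]` of the design `(Ω, B)`:
for distinct collinear `x, y`, `em x y` swaps `x` and `y`, swaps the remaining two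
points of each line through `x` and `y`, and fixes all other points; otherwise it
is the identity. -/
def IsElemMoves (B : Finset (Finset Ω)) (em : Ω → Ω → Equiv.Perm Ω) : Prop :=
  (∀ x y : Ω, x ≠ y → Collin B x y →
    em x y x = y ∧ em x y y = x ∧
    (∀ L ∈ B, x ∈ L → y ∈ L → ∀ a ∈ L, a ≠ x → a ≠ y →
      em x y a ∈ L ∧ em x y a ≠ a ∧ em x y a ≠ x ∧ em x y a ≠ y) ∧
    (∀ a : Ω, a ≠ x → a ≠ y → (∀ L ∈ B, x ∈ L → y ∈ L → a ∉ L) → em x y a = a)) ∧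
  (∀ x y : Ω, (x = y ∨ ¬ Collin B x y) → em x y = 1)

/-- The move sequence `[a₀, a₁, …, a_m] = [a₀,a₁][a₁,a₂]⋯[a_{m-1},a_m]`. -/
def moveSeq (em : Ω → Ω → Equiv.Perm Ω) : List Ω → Equiv.Perm Ω
  | x :: y :: l => em x y * moveSeq em (y :: l)
  | _ => 1

/-- The hole stabilizer `π_x(Δ)`: the group of all closed move sequences based at `x`. -/
def holeStab (em : Ω → Ω → Equiv.Perm Ω) (x : Ω) : Subgroup (Equiv.Perm Ω) :=
  Subgroup.closure {g | ∃ l : List Ω, g = moveSeq em (x :: (l ++ [x]))}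

-- uniqueness of fourth point
lemma fourth_uniq {L : Finset Ω} (hcard : L.card = 4) {p q r u v : Ω}
    (hp : p ∈ L) (hq : q ∈ L) (hr : r ∈ L)
    (hpq : p ≠ q) (hpr : p ≠ r) (hqr : q ≠ r)
    (hu : u ∈ L) (hup : u ≠ p) (huq : u ≠ q) (hur : u ≠ r)
    (hv : v ∈ L) (hvp : v ≠ p) (hvq : v ≠ q) (hvr : v ≠ r) : u = v := by
  have hsub : ({p, q, r} : Finset Ω) ⊆ L := by
    intro z hz; simp at hz; rcases hz with h|h|h <;> subst h <;> assumption
  have hc3 : ({p, q, r} : Finset Ω).card = 3 := by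
    rw [Finset.card_insert_of_notMem (by simp [hpq, hpr]),
        Finset.card_insert_of_notMem (by simp [hqr])]
    simp
  have h1 : (L \ {p, q, r}).card = 1 := by
    rw [Finset.card_sdiff_of_subset hsub, hcard, hc3]
  obtain ⟨w, hw⟩ := Finset.card_eq_one.mp h1
  have hu' : u ∈ L \ ({p,q,r} : Finset Ω) := by
    simp [Finset.mem_sdiff, hu, hup, huq, hur]
  have hv' : v ∈ L \ ({p,q,r} : Finset Ω) := by
    simp [Finset.mem_sdiff, hv, hvp, hvq, hvr]
  rw [hw, Finset.mem_singleton] at hu' hv'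
  rw [hu', hv']

lemma em_symm {B : Finset (Finset Ω)} {em : Ω → Ω → Equiv.Perm Ω}
    (hD : IsSupersimpleDesign B n lam) (hem : IsElemMoves B em)
    {x y : Ω} (hxy : x ≠ y) (hc : Collin B x y) : em x y = em y x := by
  have hc' : Collin B y x := by obtain ⟨L, hL, h1, h2⟩ := hc; exact ⟨L, hL, h2, h1⟩
  obtain ⟨e1, e2, e3, e4⟩ := hem.1 x y hxy hc
  obtain ⟨f1, f2, f3, f4⟩ := hem.1 y x hxy.symm hc'
  ext a
  by_cases hax : a = x
  · subst hax; rw [e1, f2]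
  by_cases hay : a = y
  · subst hay; rw [e2, f1]
  by_cases h : ∃ L ∈ B, x ∈ L ∧ y ∈ L ∧ a ∈ L
  · obtain ⟨L, hL, hxL, hyL, haL⟩ := h
    obtain ⟨u1, u2, u3, u4⟩ := e3 L hL hxL hyL a haL hax hay
    obtain ⟨v1, v2, v3, v4⟩ := f3 L hL hyL hxL a haL hay hax
    exact fourth_uniq (hD.2.1 L hL) hxL hyL haL hxy (Ne.symm hax) (Ne.symm hay)
      u1 u3 u4 u2 v1 v4 v3 v2
  · push_neg at h
    rw [e4 a hax hay (fun L hL h1 h2 => h L hL h1 h2),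
        f4 a hay hax (fun L hL h1 h2 => h L hL h2 h1)]

lemma em_invol {B : Finset (Finset Ω)} {em : Ω → Ω → Equiv.Perm Ω}
    (hD : IsSupersimpleDesign B n lam) (hem : IsElemMoves B em)
    {x y : Ω} (hxy : x ≠ y) (hc : Collin B x y) : em x y * em x y = 1 := by
  obtain ⟨e1, e2, e3, e4⟩ := hem.1 x y hxy hc
  ext a
  simp only [Equiv.Perm.mul_apply, Equiv.Perm.one_apply]
  by_cases hax : a = x
  · subst hax; rw [e1, e2]
  by_cases hay : a = y
  · subst hay; rw [e2, e1]
  by_cases h : ∃ L ∈ B, x ∈ L ∧ y ∈ L ∧ a ∈ L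
  · obtain ⟨L, hL, hxL, hyL, haL⟩ := h
    obtain ⟨u1, u2, u3, u4⟩ := e3 L hL hxL hyL a haL hax hay
    obtain ⟨w1, w2, w3, w4⟩ := e3 L hL hxL hyL _ u1 u3 u4
    exact fourth_uniq (hD.2.1 L hL) hxL hyL u1 hxy u3.symm u4.symm
      w1 w3 w4 w2 haL hax hay (Ne.symm u2)
  · push_neg at h
    have := e4 a hax hay (fun L hL h1 h2 => h L hL h1 h2)
    rw [this, this]

lemma moveSeq_append_pair (em : Ω → Ω → Equiv.Perm Ω) :
    ∀ (l : List Ω) (a b : Ω),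
      moveSeq em (l ++ [a, b]) = moveSeq em (l ++ [a]) * em a b
  | [], a, b => by simp [moveSeq]
  | [c], a, b => by simp [moveSeq]
  | c :: d :: l, a, b => by
    have ih := moveSeq_append_pair em (d :: l) a b
    simp only [List.cons_append] at ih ⊢
    rw [moveSeq, moveSeq, ih, mul_assoc]

lemma moveSeq_trivial {em : Ω → Ω → Equiv.Perm Ω} (h1 : ∀ a b, em a b = 1) :
    ∀ l : List Ω, moveSeq em l = 1
  | [] => rfl
  | [_] => rfl
  | a :: b :: l => by rw [moveSeq, h1, moveSeq_trivial h1 (b :: l), one_mul]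

lemma conj_mem {B : Finset (Finset Ω)} {em : Ω → Ω → Equiv.Perm Ω}
    (hD : IsSupersimpleDesign B n lam) (hem : IsElemMoves B em)
    {u v : Ω} (huv : u ≠ v) (hc : Collin B u v) :
    ∀ g ∈ holeStab em u, em u v * g * em u v ∈ holeStab em v := by
  have hsym := em_symm hD hem huv hc
  have hinv := em_invol hD hem huv hc
  intro g hg
  refine Subgroup.closure_induction ?_ ?_ ?_ ?_ hg
  · rintro g ⟨l, rfl⟩
    apply Subgroup.subset_closure
    refine ⟨(u :: (l ++ [u])), ?_⟩
    have key : moveSeq em (v :: ((u :: (l ++ [u])) ++ [v]))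
        = em u v * moveSeq em (u :: (l ++ [u])) * em u v := by
      have h2 : (v :: ((u :: (l ++ [u])) ++ [v])) = (v :: u :: (l ++ [u])) ++ [v] := by simp
      have h3 : (v :: u :: (l ++ [u])) ++ [v] = (v :: u :: l) ++ [u, v] := by simp
      rw [h2, h3, moveSeq_append_pair]
      have h4 : (v :: u :: l) ++ [u] = v :: u :: (l ++ [u]) := by simp
      rw [h4, moveSeq, hsym, mul_assoc]
    rw [key]
  · simp only [mul_one]
    rw [hinv]
    exact one_mem _
  · intro a b _ _ ha hb
    have : em u v * (a * b) * em u v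
        = (em u v * a * em u v) * (em u v * b * em u v) := by
      have : em u v * a * em u v * (em u v * b * em u v)
          = em u v * a * (em u v * em u v) * b * em u v := by group
      rw [this, hinv, mul_one]
      group
    rw [this]
    exact mul_mem ha hb
  · intro a _ ha
    have heq : em u v * a⁻¹ * em u v = (em u v * a * em u v)⁻¹ := by
      have h5 : (em u v)⁻¹ = em u v := by
        rw [inv_eq_iff_mul_eq_one, hinv]
      rw [mul_inv_rev, mul_inv_rev, h5]
      group
    rw [heq]
    exact inv_mem ha


/-- In a supersimple 2-(n,4,λ) design, the hole stabilizers `π_x(Δ)` and `π_y(Δ)`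
are conjugate subgroups of `Sym(Ω)`. -/
theorem holeStab_conjugate {Ω : Type*} [Fintype Ω] [DecidableEq Ω]
    (B : Finset (Finset Ω)) (n lam : ℕ)
    (hD : IsSupersimpleDesign B n lam)
    (em : Ω → Ω → Equiv.Perm Ω) (hem : IsElemMoves B em)
    (x y : Ω) :
    ∃ c : Equiv.Perm Ω, ∀ g : Equiv.Perm Ω,
      g ∈ holeStab em x ↔ c * g * c⁻¹ ∈ holeStab em y := by
  by_cases hxy : x = y
  · subst hxy; exact ⟨1, by simp⟩
  by_cases hc : Collin B x y
  · have hc' : Collin B y x := by obtain ⟨L, hL, h1, h2⟩ := hc; exact ⟨L, hL, h2, h1⟩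
    have hsym := em_symm hD hem hxy hc
    have hinv := em_invol hD hem hxy hc
    have hinvv : (em x y)⁻¹ = em x y := by rw [inv_eq_iff_mul_eq_one, hinv]
    refine ⟨em x y, fun g => ⟨fun hg => ?_, fun hg => ?_⟩⟩
    · rw [hinvv]
      exact conj_mem hD hem hxy hc g hg
    · have := conj_mem hD hem (Ne.symm hxy) hc' _ hg
      rw [hinvv] at this
      have heq : em y x * (em x y * g * em x y) * em y x = g := by
        rw [← hsym]
        calc em x y * (em x y * g * em x y) * em x y
            = (em x y * em x y) * g * (em x y * em x y) := by group
          _ = g := by rw [hinv]; group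
      rwa [heq] at this
  · -- lam = 0 case: all elementary moves are the identity
    have hem1 : ∀ a b : Ω, em a b = 1 := by
      have hlam : lam = 0 := by
        have := hD.2.2.1 x y hxy
        rw [← this]
        rw [Finset.card_eq_zero, Finset.filter_eq_empty_iff]
        intro L hL ⟨h1, h2⟩
        exact hc ⟨L, hL, h1, h2⟩
      intro a b
      by_cases hab : a = b
      · exact hem.2 a b (Or.inl hab)
      · refine hem.2 a b (Or.inr ?_)
        rintro ⟨L, hL, h1, h2⟩
        have h0 := hD.2.2.1 a b hab
        rw [hlam, Finset.card_eq_zero, Finset.filter_eq_empty_iff] at h0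
        exact h0 hL ⟨h1, h2⟩
    have hbot : ∀ z : Ω, holeStab em z = ⊥ := by
      intro z
      rw [eq_bot_iff, holeStab]
      rw [Subgroup.closure_le]
      rintro g ⟨l, rfl⟩
      simp [moveSeq_trivial hem1]
    refine ⟨1, fun g => ?_⟩
    rw [hbot x, hbot y]
    simp
end

section
/- Let Δ be a supersimple 2-(n,4,λ) design with point ∞, and suppose G = π_∞(Δ) is transitive on Ω∖{∞} but preserves a system of imprimitivity with ℓ ≥ 2 blocks. If there exists a line {a₁,a₂,b,∞} with a₁,a₂ in the same block and b in a different block, then n ≤ (ℓ/(ℓ-1))(6λ - 7 - 1/ℓ). -/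
variable {Ω : Type*} [Fintype Ω] [DecidableEq Ω]

/-!
For a point `c`, consider the closed move sequence `g = [∞, a₁, c, ∞]` in `π_∞(Δ)`. If `c` lies
on no line through `a₁, a₂` and on no line through `a₂, ∞`, then `g a₂ = b`, while `g a₁ = a₁`
when `c` is on a line through `a₁, ∞` and `g a₁ = c` otherwise. As `g` permutes the blocks and
`b` is not in the block of `a₁, a₂`, the first case is impossible and the second puts `c` in the
block of `b`. So each of the `(ℓ - 1) k` points outside the block of `b` (and other than `∞`) lies
in the closure of `{a₁, a₂}` or, off the line, in the closures of both `{a₁, ∞}` and `{a₂, ∞}`.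
Closures have at most `2λ + 2` points, whence `(ℓ - 1) k ≤ 4λ - 2`; for `λ = 2` the second set
has at most one point. With `n = ℓ k + 1` and `12 ∣ n (n - 1) λ` this forces
`(ℓ - 1) k ≤ 6λ - 8`, which is the claimed bound.
-/

theorem Finset.pairwise_ne_of_card_eq_four {α : Type*} [DecidableEq α] {w x y z : α}
    (h : ({w, x, y, z} : Finset α).card = 4) :
    w ≠ x ∧ w ≠ y ∧ w ≠ z ∧ x ≠ y ∧ x ≠ z ∧ y ≠ z := by
  refine ⟨?_, ?_, ?_, ?_, ?_, ?_⟩ <;> rintro rfl <;>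
    simp only [Finset.mem_insert, Finset.mem_singleton, true_or, or_true,
      Finset.insert_eq_of_mem] at h <;>
    exact (Finset.card_le_three.trans_lt (by norm_num : 3 < 4)).ne h

theorem Finset.exists_eq_insert_of_card_eq_four {α : Type*} [DecidableEq α] {s : Finset α}
    (hs : s.card = 4) {x y z : α} (hx : x ∈ s) (hy : y ∈ s) (hz : z ∈ s)
    (hxy : x ≠ y) (hxz : x ≠ z) (hyz : y ≠ z) : ∃ w, s = {x, y, z, w} := by
  have hsub : ({x, y, z} : Finset α) ⊆ s := by simp [Finset.insert_subset_iff, hx, hy, hz]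
  obtain ⟨w, hw⟩ : ∃ w, s \ {x, y, z} = {w} := by
    rw [← Finset.card_eq_one, Finset.card_sdiff_of_subset hsub, hs,
      Finset.card_eq_three.2 ⟨x, y, z, hxy, hxz, hyz, rfl⟩]
  refine ⟨w, ?_⟩
  rw [← Finset.union_sdiff_of_subset hsub, hw]
  simp only [Finset.insert_union, Finset.singleton_union]

section Blocks

variable {ι α : Type*} [DecidableEq α] {blocks : ι → Finset α}

theorem apply_mem_block_of_apply_mem (hdisj : ∀ i j, i ≠ j → Disjoint (blocks i) (blocks j))
    {g : α → α} (hg : ∀ i, ∃ j, (blocks i).image g = blocks j) {i j : ι} {x y : α}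
    (hx : x ∈ blocks i) (hy : y ∈ blocks i) (hgx : g x ∈ blocks j) : g y ∈ blocks j := by
  obtain ⟨m, hm⟩ := hg i
  have hmj : m = j := by
    by_contra hne
    exact Finset.disjoint_left.mp (hdisj m j hne) (hm ▸ Finset.mem_image_of_mem g hx) hgx
  exact hmj ▸ hm ▸ Finset.mem_image_of_mem g hy

variable [Fintype ι] {s : Finset α} {k : ℕ}

theorem card_eq_of_blocks (hdisj : ∀ i j, i ≠ j → Disjoint (blocks i) (blocks j))
    (hcover : Finset.univ.biUnion blocks = s) (hsize : ∀ i, (blocks i).card = k) :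
    s.card = Fintype.card ι * k := by
  rw [← hcover, Finset.card_biUnion (fun i _ j _ hij => hdisj i j hij)]
  simp [hsize]

theorem card_sdiff_block (hdisj : ∀ i j, i ≠ j → Disjoint (blocks i) (blocks j))
    (hcover : Finset.univ.biUnion blocks = s) (hsize : ∀ i, (blocks i).card = k) (j : ι) :
    (s \ blocks j).card = (Fintype.card ι - 1) * k := by
  have hj : blocks j ⊆ s := hcover ▸ Finset.subset_biUnion_of_mem blocks (Finset.mem_univ j)
  rw [Finset.card_sdiff_of_subset hj, card_eq_of_blocks hdisj hcover hsize, hsize, tsub_mul,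
    one_mul]

end Blocks

namespace IsElemMoves

variable {α : Type*} {B : Finset (Finset α)} {em : α → α → Equiv.Perm α} {x y u v c : α}

theorem apply_eq_self (hem : IsElemMoves B em) (hcx : c ≠ x) (hcy : c ≠ y)
    (h : ∀ M ∈ B, x ∈ M → y ∈ M → c ∉ M) : em x y c = c := by
  by_cases hmove : x ≠ y ∧ Collin B x y
  · exact (hem.1 x y hmove.1 hmove.2).2.2.2 c hcx hcy h
  · rw [hem.2 x y (by tauto)]
    rfl

theorem apply_left (hem : IsElemMoves B em) (hxy : x ≠ y) (hcol : Collin B x y) :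
    em x y x = y :=
  (hem.1 x y hxy hcol).1

theorem apply_of_mem [DecidableEq α] (hem : IsElemMoves B em)
    (hM : ({x, y, u, v} : Finset α) ∈ B) (h4 : ({x, y, u, v} : Finset α).card = 4) :
    em x y u = v := by
  obtain ⟨hxy, hxu, -, hyu, -, -⟩ := Finset.pairwise_ne_of_card_eq_four h4
  obtain ⟨hmem, hne_u, hne_x, hne_y⟩ := (hem.1 x y hxy ⟨_, hM, by simp, by simp⟩).2.2.1 _ hM
    (by simp) (by simp) u (by simp) hxu.symm hyu.symm
  simp only [Finset.mem_insert, Finset.mem_singleton] at hmem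
  tauto

end IsElemMoves

section LineClosure

variable {α : Type*} [DecidableEq α] {B : Finset (Finset α)} {x y c : α}

def lineClosure (B : Finset (Finset α)) (x y : α) : Finset α :=
  (B.filter fun L => x ∈ L ∧ y ∈ L).biUnion id

theorem mem_lineClosure : c ∈ lineClosure B x y ↔ ∃ L ∈ B, x ∈ L ∧ y ∈ L ∧ c ∈ L := by
  simp [lineClosure, and_assoc]

theorem lineClosure_comm (x y : α) : lineClosure B x y = lineClosure B y x := by
  ext c
  simp only [mem_lineClosure]
  grind

theorem subset_lineClosure {L : Finset α} (hL : L ∈ B) (hx : x ∈ L) (hy : y ∈ L) :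
    L ⊆ lineClosure B x y :=
  fun _ hc => mem_lineClosure.2 ⟨L, hL, hx, hy, hc⟩

end LineClosure

namespace IsSupersimpleDesign

variable {B : Finset (Finset Ω)} {n lam : ℕ} {L : Finset Ω} {x y z : Ω}

theorem card_eq_four (hD : IsSupersimpleDesign B n lam) (hL : L ∈ B) : L.card = 4 :=
  hD.2.1 L hL

theorem card_filter_mem (hD : IsSupersimpleDesign B n lam) (hxy : x ≠ y) :
    (B.filter fun L => x ∈ L ∧ y ∈ L).card = lam :=
  hD.2.2.1 x y hxy

theorem card_inter_le_two (hD : IsSupersimpleDesign B n lam) {L M : Finset Ω} (hL : L ∈ B)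
    (hM : M ∈ B) (hLM : L ≠ M) : (L ∩ M).card ≤ 2 :=
  hD.2.2.2 L hL M hM hLM

theorem lam_pos (hD : IsSupersimpleDesign B n lam) (hL : L ∈ B) (hx : x ∈ L) (hy : y ∈ L)
    (hxy : x ≠ y) : 0 < lam :=
  hD.card_filter_mem hxy ▸ Finset.card_pos.2 ⟨L, Finset.mem_filter.2 ⟨hL, hx, hy⟩⟩

theorem collin (hD : IsSupersimpleDesign B n lam) (hlam : 0 < lam) (hxy : x ≠ y) :
    Collin B x y := by
  obtain ⟨L, hL⟩ := Finset.card_pos.1 ((hD.card_filter_mem hxy).symm ▸ hlam)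
  exact ⟨L, (Finset.mem_filter.1 hL).1, (Finset.mem_filter.1 hL).2⟩

theorem twelve_dvd (hD : IsSupersimpleDesign B n lam) : 12 ∣ n * (n - 1) * lam := by
  have hcount := Finset.sum_card_bipartiteAbove_eq_sum_card_bipartiteBelow
    (fun (M : Finset Ω) (p : Ω × Ω) => p.1 ∈ M ∧ p.2 ∈ M) (s := B) (t := Finset.univ.offDiag)
  have hlines : ∀ M ∈ B, (Finset.univ.offDiag.bipartiteAbove
      (fun (M : Finset Ω) (p : Ω × Ω) => p.1 ∈ M ∧ p.2 ∈ M) M).card = 12 := by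
    intro M hM
    have hoff : Finset.univ.offDiag.bipartiteAbove
        (fun (M : Finset Ω) (p : Ω × Ω) => p.1 ∈ M ∧ p.2 ∈ M) M = M.offDiag := by
      ext p
      simp only [Finset.bipartiteAbove, Finset.mem_filter, Finset.mem_offDiag, Finset.mem_univ]
      tauto
    rw [hoff, Finset.offDiag_card, hD.card_eq_four hM]
  have hpairs : ∀ p ∈ (Finset.univ : Finset Ω).offDiag, (B.bipartiteBelow
      (fun (M : Finset Ω) (p : Ω × Ω) => p.1 ∈ M ∧ p.2 ∈ M) p).card = lam := fun p hp =>
    hD.card_filter_mem (Finset.mem_offDiag.1 hp).2.2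
  rw [Finset.sum_congr rfl hlines, Finset.sum_congr rfl hpairs, Finset.sum_const,
    Finset.sum_const, Finset.offDiag_card, Finset.card_univ, hD.1] at hcount
  refine ⟨B.card, ?_⟩
  rw [Nat.mul_sub_one]
  simp only [smul_eq_mul] at hcount
  linarith

theorem card_lineClosure_le (hD : IsSupersimpleDesign B n lam) (hxy : x ≠ y) :
    (lineClosure B x y).card ≤ 2 * lam + 2 := by
  have hsub : lineClosure B x y ⊆
      {x, y} ∪ (B.filter fun M => x ∈ M ∧ y ∈ M).biUnion (· \ {x, y}) := by
    intro c hc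
    obtain ⟨M, hM, hxM, hyM, hcM⟩ := mem_lineClosure.1 hc
    by_cases hcxy : c ∈ ({x, y} : Finset Ω)
    · exact Finset.mem_union_left _ hcxy
    · exact Finset.mem_union_right _ (Finset.mem_biUnion.2
        ⟨M, Finset.mem_filter.2 ⟨hM, hxM, hyM⟩, Finset.mem_sdiff.2 ⟨hcM, hcxy⟩⟩)
  have hrest : ∀ M ∈ B.filter (fun M => x ∈ M ∧ y ∈ M), (M \ {x, y}).card = 2 := by
    intro M hM
    obtain ⟨hMB, hxM, hyM⟩ := Finset.mem_filter.1 hM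
    rw [Finset.card_sdiff_of_subset (by simp [Finset.insert_subset_iff, hxM, hyM]),
      hD.card_eq_four hMB, Finset.card_pair hxy]
  calc (lineClosure B x y).card
      ≤ ({x, y} : Finset Ω).card + ((B.filter fun M => x ∈ M ∧ y ∈ M).biUnion
          (· \ {x, y})).card := (Finset.card_le_card hsub).trans (Finset.card_union_le _ _)
    _ ≤ 2 + lam * 2 := by
        gcongr
        · exact Finset.card_le_two
        · refine Finset.card_biUnion_le.trans ?_
          rw [Finset.sum_congr rfl hrest, Finset.sum_const, hD.card_filter_mem hxy, smul_eq_mul]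
    _ = 2 * lam + 2 := by ring

theorem card_lineClosure_sdiff_add_card_le
    (hD : IsSupersimpleDesign B n lam) (hxy : x ≠ y) {S : Finset Ω}
    (hS : S ⊆ lineClosure B x y) : (lineClosure B x y \ S).card + S.card ≤ 2 * lam + 2 :=
  (Finset.card_sdiff_add_card_eq_card hS).trans_le (hD.card_lineClosure_le hxy)

theorem exists_lineClosure_sdiff_subset_of_lam_eq_two (hD : IsSupersimpleDesign B n lam)
    (hlam : lam = 2) (hL : L ∈ B) (hx : x ∈ L) (hz : z ∈ L) (hxz : x ≠ z) :
    ∃ M ∈ B, M ≠ L ∧ x ∈ M ∧ z ∈ M ∧ lineClosure B x z \ L ⊆ M := by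
  obtain ⟨M, hM⟩ : ∃ M, (B.filter fun M => x ∈ M ∧ z ∈ M).erase L = {M} := by
    rw [← Finset.card_eq_one, Finset.card_erase_of_mem (Finset.mem_filter.2 ⟨hL, hx, hz⟩),
      hD.card_filter_mem hxz, hlam]
  have hother : ∀ N ∈ B, N ≠ L → x ∈ N → z ∈ N → N = M := fun N hN hNL hxN hzN =>
    Finset.mem_singleton.1 (hM ▸ Finset.mem_erase.2 ⟨hNL, Finset.mem_filter.2 ⟨hN, hxN, hzN⟩⟩)
  obtain ⟨hML, hMf⟩ := Finset.mem_erase.1 (hM ▸ Finset.mem_singleton_self M)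
  obtain ⟨hMB, hxM, hzM⟩ := Finset.mem_filter.1 hMf
  refine ⟨M, hMB, hML, hxM, hzM, fun c hc => ?_⟩
  obtain ⟨hcl, hcL⟩ := Finset.mem_sdiff.1 hc
  obtain ⟨N, hN, hxN, hzN, hcN⟩ := mem_lineClosure.1 hcl
  exact hother N hN (fun h => hcL (h ▸ hcN)) hxN hzN ▸ hcN

theorem card_inter_lineClosure_sdiff_le_one (hD : IsSupersimpleDesign B n lam) (hlam : lam = 2)
    (hL : L ∈ B) (hx : x ∈ L) (hy : y ∈ L) (hz : z ∈ L) (hxy : x ≠ y) (hxz : x ≠ z)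
    (hyz : y ≠ z) : ((lineClosure B x z ∩ lineClosure B y z) \ L).card ≤ 1 := by
  obtain ⟨M, hMB, hML, hxM, hzM, hM⟩ :=
    hD.exists_lineClosure_sdiff_subset_of_lam_eq_two hlam hL hx hz hxz
  obtain ⟨N, hNB, -, hyN, hzN, hN⟩ :=
    hD.exists_lineClosure_sdiff_subset_of_lam_eq_two hlam hL hy hz hyz
  have hMN : M ≠ N := by
    rintro rfl
    have h3 : ({x, y, z} : Finset Ω) ⊆ M ∩ L := by
      simp [Finset.insert_subset_iff, hx, hy, hz, hxM, hyN, hzM]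
    have := (Finset.card_le_card h3).trans (hD.card_inter_le_two hMB hL hML)
    rw [Finset.card_eq_three.2 ⟨x, y, z, hxy, hxz, hyz, rfl⟩] at this
    omega
  have hsub : (lineClosure B x z ∩ lineClosure B y z) \ L ⊆ (M ∩ N).erase z := by
    intro c hc
    obtain ⟨⟨hcx, hcy⟩, hcL⟩ := Finset.mem_sdiff.1 hc |>.imp_left Finset.mem_inter.1
    refine Finset.mem_erase.2 ⟨fun h => hcL (h ▸ hz), Finset.mem_inter.2 ⟨?_, ?_⟩⟩
    · exact hM (Finset.mem_sdiff.2 ⟨hcx, hcL⟩)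
    · exact hN (Finset.mem_sdiff.2 ⟨hcy, hcL⟩)
  calc _ ≤ ((M ∩ N).erase z).card := Finset.card_le_card hsub
    _ = (M ∩ N).card - 1 := Finset.card_erase_of_mem (Finset.mem_inter.2 ⟨hzM, hzN⟩)
    _ ≤ 1 := by have := hD.card_inter_le_two hMB hNB hMN; omega

end IsSupersimpleDesign

theorem add_eight_le_six_mul {ℓ k n lam c : ℕ} (hl : 2 ≤ ℓ) (hk : 2 ≤ k) (hn : n = ℓ * k + 1)
    (hdvd : 12 ∣ n * (n - 1) * lam) (hout : (ℓ - 1) * k ≤ 2 * lam + c) (hc : c + 2 ≤ 2 * lam)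
    (hc₂ : lam = 2 → c ≤ 1) : (ℓ - 1) * k + 8 ≤ 6 * lam := by
  obtain ⟨m, rfl⟩ : ∃ m, ℓ = m + 1 := ⟨ℓ - 1, by omega⟩
  simp only [add_tsub_cancel_right] at hout ⊢
  by_cases hlam : 3 ≤ lam
  · omega
  -- For `lam ≤ 2` only `(m, k) = (1, 2)` (`lam = 1`) and `(1, 5)` (`lam = 2`) survive the
  -- bound, and they give `n = 5` and `n = 11`, which violate `12 ∣ n (n - 1) lam`.
  have hmk : m * k ≤ 6 := by omega
  have hm : m ≤ 3 := by nlinarith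
  have hk6 : k ≤ 6 := by nlinarith
  subst hn
  interval_cases lam <;> interval_cases m <;> interval_cases k <;> omega

theorem cast_le_of_add_eight_le_six_mul {ℓ k n lam : ℕ} (hl : 2 ≤ ℓ) (hn : n = ℓ * k + 1)
    (h : (ℓ - 1) * k + 8 ≤ 6 * lam) :
    (n : ℚ) ≤ ((ℓ : ℚ) / (ℓ - 1)) * (6 * lam - 7 - 1 / ℓ) := by
  have hl' : (2 : ℚ) ≤ ℓ := by exact_mod_cast hl
  have hq : ((ℓ : ℚ) - 1) * k + 8 ≤ 6 * lam := by
    have := (Nat.cast_le (α := ℚ)).2 h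
    push_cast [Nat.cast_sub (by omega : 1 ≤ ℓ)] at this
    exact this
  have hrhs : (ℓ : ℚ) * (6 * lam - 7 - 1 / ℓ) = 6 * lam * ℓ - 7 * ℓ - 1 := by
    field_simp
  rw [div_mul_eq_mul_div, le_div_iff₀ (by linarith), hrhs, hn]
  push_cast
  nlinarith

theorem moveSeq_loop_apply {α : Type*} (em : α → α → Equiv.Perm α) (o p c y : α) :
    moveSeq em [o, p, c, o] y = em o p (em p c (em c o y)) :=
  rfl

theorem moveSeq_loop_mem_holeStab {α : Type*} (em : α → α → Equiv.Perm α) (o p c : α) :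
    moveSeq em [o, p, c, o] ∈ holeStab em o :=
  Subgroup.subset_closure ⟨[p, c], rfl⟩

section Loops

variable {B : Finset (Finset Ω)} {n lam : ℕ} {em : Ω → Ω → Equiv.Perm Ω} {o p q b c : Ω}

theorem moveSeq_loop_apply_of_line (hD : IsSupersimpleDesign B n lam) (hem : IsElemMoves B em)
    (hline : ({p, q, b, o} : Finset Ω) ∈ B) (hpq : c ∉ lineClosure B p q)
    (hqo : c ∉ lineClosure B q o) : moveSeq em [o, p, c, o] q = b := by
  obtain ⟨hpq', -, -, -, hqo', -⟩ := Finset.pairwise_ne_of_card_eq_four (hD.card_eq_four hline)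
  have hqc : q ≠ c := fun h => hqo (h ▸ subset_lineClosure hline (by simp) (by simp) (by simp))
  have hline' : ({o, p, q, b} : Finset Ω) ∈ B := by
    convert hline using 1
    ext
    simp only [Finset.mem_insert, Finset.mem_singleton]
    tauto
  rw [moveSeq_loop_apply,
    hem.apply_eq_self hqc hqo' fun M hM hcM hoM hqM =>
      hqo (mem_lineClosure.2 ⟨M, hM, hqM, hoM, hcM⟩),
    hem.apply_eq_self hpq'.symm hqc fun M hM hpM hcM hqM =>
      hpq (mem_lineClosure.2 ⟨M, hM, hpM, hqM, hcM⟩),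
    hem.apply_of_mem hline' (hD.card_eq_four hline')]

theorem moveSeq_loop_apply_of_not_mem (hD : IsSupersimpleDesign B n lam)
    (hem : IsElemMoves B em) (hpo : p ≠ o) (hcol : Collin B p o) (hc : c ∉ lineClosure B p o) :
    moveSeq em [o, p, c, o] p = c := by
  obtain ⟨L, hL, hpL, hoL⟩ := hcol
  have hpc : p ≠ c := fun h => hc (h ▸ subset_lineClosure hL hpL hoL hpL)
  have hco : c ≠ o := fun h => hc (h ▸ subset_lineClosure hL hpL hoL hoL)
  rw [moveSeq_loop_apply,
    hem.apply_eq_self hpc hpo fun M hM hcM hoM hpM => hc (mem_lineClosure.2 ⟨M, hM, hpM, hoM, hcM⟩),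
    hem.apply_left hpc (hD.collin (hD.lam_pos hL hpL hoL hpo) hpc),
    hem.apply_eq_self hco hpc.symm fun M hM hoM hpM hcM =>
      hc (mem_lineClosure.2 ⟨M, hM, hpM, hoM, hcM⟩)]

/-- With `M = {c, o, p, d}` the line through `p, o, c`, the loop moves `p ↦ d ↦ o ↦ p`. -/
theorem moveSeq_loop_apply_of_mem (hD : IsSupersimpleDesign B n lam) (hem : IsElemMoves B em)
    (hc : c ∈ lineClosure B p o) (hcp : c ≠ p) (hco : c ≠ o) (hpo : p ≠ o) :
    moveSeq em [o, p, c, o] p = p := by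
  obtain ⟨M, hM, hpM, hoM, hcM⟩ := mem_lineClosure.1 hc
  obtain ⟨d, rfl⟩ :=
    Finset.exists_eq_insert_of_card_eq_four (hD.card_eq_four hM) hcM hoM hpM hco hcp hpo.symm
  have hM' : ({p, c, d, o} : Finset Ω) ∈ B := by
    convert hM using 1
    ext
    simp only [Finset.mem_insert, Finset.mem_singleton]
    tauto
  rw [moveSeq_loop_apply, hem.apply_of_mem hM (hD.card_eq_four hM),
    hem.apply_of_mem hM' (hD.card_eq_four hM'), hem.apply_left hpo.symm ⟨_, hM, by simp, by simp⟩]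

end Loops

section Imprimitivity

variable {ι : Type*} {B : Finset (Finset Ω)} {n lam : ℕ} {em : Ω → Ω → Equiv.Perm Ω}
  {blocks : ι → Finset Ω} {o p q b c : Ω} {i j : ι}

theorem mem_block_of_not_mem_lineClosure (hD : IsSupersimpleDesign B n lam)
    (hem : IsElemMoves B em) (hdisj : ∀ i j, i ≠ j → Disjoint (blocks i) (blocks j))
    (hinv : ∀ g ∈ holeStab em o, ∀ i, ∃ j, (blocks i).image g = blocks j)
    (hline : ({p, q, b, o} : Finset Ω) ∈ B) (hij : i ≠ j) (hp : p ∈ blocks i)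
    (hq : q ∈ blocks i) (hb : b ∈ blocks j) (hpq : c ∉ lineClosure B p q)
    (hqo : c ∉ lineClosure B q o) : c ∈ blocks j := by
  obtain ⟨-, -, hpo, -, -, -⟩ := Finset.pairwise_ne_of_card_eq_four (hD.card_eq_four hline)
  have hg := hinv _ (moveSeq_loop_mem_holeStab em o p c)
  have hgq := moveSeq_loop_apply_of_line hD hem hline hpq hqo
  by_cases hpoc : c ∈ lineClosure B p o
  · have hcp : c ≠ p := by
      rintro rfl
      exact hpq (subset_lineClosure hline (by simp) (by simp) (by simp))
    have hco : c ≠ o := by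
      rintro rfl
      exact hqo (subset_lineClosure hline (by simp) (by simp) (by simp))
    have hgp := moveSeq_loop_apply_of_mem hD hem hpoc hcp hco hpo
    have hbi := apply_mem_block_of_apply_mem hdisj hg hp hq (hgp.symm ▸ hp)
    exact absurd hb (Finset.disjoint_left.1 (hdisj i j hij) (hgq ▸ hbi))
  · have hgp := moveSeq_loop_apply_of_not_mem hD hem hpo ⟨_, hline, by simp, by simp⟩ hpoc
    exact hgp ▸ apply_mem_block_of_apply_mem hdisj hg hq hp (hgq.symm ▸ hb)

theorem erase_sdiff_block_subset (hD : IsSupersimpleDesign B n lam) (hem : IsElemMoves B em)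
    (hdisj : ∀ i j, i ≠ j → Disjoint (blocks i) (blocks j))
    (hinv : ∀ g ∈ holeStab em o, ∀ i, ∃ j, (blocks i).image g = blocks j)
    (hline : ({p, q, b, o} : Finset Ω) ∈ B) (hij : i ≠ j) (hp : p ∈ blocks i)
    (hq : q ∈ blocks i) (hb : b ∈ blocks j) :
    Finset.univ.erase o \ blocks j ⊆ (lineClosure B p q \ {b, o}) ∪
      ((lineClosure B p o ∩ lineClosure B q o) \ {p, q, b, o}) := by
  intro c hc
  obtain ⟨hco, hcj⟩ := Finset.mem_sdiff.1 hc |>.imp_left Finset.ne_of_mem_erase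
  have hcb : c ≠ b := fun h => hcj (h ▸ hb)
  by_cases hpq : c ∈ lineClosure B p q
  · exact Finset.mem_union_left _ (by simp [hpq, hcb, hco])
  have hline' : ({q, p, b, o} : Finset Ω) ∈ B := by rwa [Finset.insert_comm]
  have hqo : c ∈ lineClosure B q o := by
    by_contra hqo
    exact hcj (mem_block_of_not_mem_lineClosure hD hem hdisj hinv hline hij hp hq hb hpq hqo)
  have hpo : c ∈ lineClosure B p o := by
    by_contra hpo
    exact hcj (mem_block_of_not_mem_lineClosure hD hem hdisj hinv hline' hij hq hp hb
      (lineClosure_comm p q ▸ hpq) hpo)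
  have hcp : c ≠ p := by
    rintro rfl
    exact hpq (subset_lineClosure hline (by simp) (by simp) (by simp))
  have hcq : c ≠ q := by
    rintro rfl
    exact hpq (subset_lineClosure hline (by simp) (by simp) (by simp))
  exact Finset.mem_union_right _ (by simp [hpo, hqo, hcp, hcq, hcb, hco])

end Imprimitivity

theorem holeStab_imprimitive_line_bound_general {Ω : Type*} [Fintype Ω] [DecidableEq Ω]
    (B : Finset (Finset Ω)) (n lam : ℕ)
    (hD : IsSupersimpleDesign B n lam)
    (em : Ω → Ω → Equiv.Perm Ω) (hem : IsElemMoves B em)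
    (inf : Ω)
    (ℓ k : ℕ) (hl : 2 ≤ ℓ)
    (blocks : Fin ℓ → Finset Ω)
    (hdisj : ∀ i j : Fin ℓ, i ≠ j → Disjoint (blocks i) (blocks j))
    (hcover : Finset.univ.biUnion blocks = Finset.univ.erase inf)
    (hsize : ∀ i : Fin ℓ, (blocks i).card = k)
    (hinv : ∀ g ∈ holeStab em inf, ∀ i : Fin ℓ, ∃ j : Fin ℓ,
      (blocks i).image g = blocks j)
    (a₁ a₂ b : Ω) (ha : a₁ ≠ a₂)
    (hline : ({a₁, a₂, b, inf} : Finset Ω) ∈ B)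
    (i j : Fin ℓ) (hij : i ≠ j)
    (ha₁ : a₁ ∈ blocks i) (ha₂ : a₂ ∈ blocks i) (hb : b ∈ blocks j) :
    (n : ℚ) ≤ ((ℓ : ℚ) / (ℓ - 1)) * (6 * lam - 7 - 1 / ℓ) := by
  obtain ⟨-, -, h₁o, -, h₂o, hbo⟩ := Finset.pairwise_ne_of_card_eq_four (hD.card_eq_four hline)
  set C := (lineClosure B a₁ inf ∩ lineClosure B a₂ inf) \ {a₁, a₂, b, inf}
  have hk : 2 ≤ k := hsize i ▸ Finset.one_lt_card.2 ⟨a₁, ha₁, a₂, ha₂, ha⟩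
  have hn : n = ℓ * k + 1 := by
    rw [← hD.1, ← Finset.card_univ, ← Finset.card_erase_add_one (Finset.mem_univ inf),
      card_eq_of_blocks hdisj hcover hsize, Fintype.card_fin]
  have hA : (lineClosure B a₁ a₂ \ {b, inf}).card ≤ 2 * lam := by
    have := hD.card_lineClosure_sdiff_add_card_le ha (S := {b, inf})
      ((Finset.subset_insert _ _).trans ((Finset.subset_insert _ _).trans
        (subset_lineClosure hline (by simp) (by simp))))
    rw [Finset.card_pair hbo] at this
    omega
  have hC : C.card + 2 ≤ 2 * lam := by
    have := hD.card_lineClosure_sdiff_add_card_le h₁o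
      (subset_lineClosure hline (by simp) (by simp))
    have hsub : C ⊆ lineClosure B a₁ inf \ {a₁, a₂, b, inf} :=
      Finset.sdiff_subset_sdiff Finset.inter_subset_left le_rfl
    rw [hD.card_eq_four hline] at this
    linarith [Finset.card_le_card hsub]
  have hC₂ (hlam : lam = 2) : C.card ≤ 1 :=
    hD.card_inter_lineClosure_sdiff_le_one hlam hline (by simp) (by simp) (by simp) ha h₁o h₂o
  have hout : (ℓ - 1) * k ≤ 2 * lam + C.card :=
    calc (ℓ - 1) * k = (Finset.univ.erase inf \ blocks j).card := by
          rw [card_sdiff_block hdisj hcover hsize, Fintype.card_fin]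
      _ ≤ (lineClosure B a₁ a₂ \ {b, inf}).card + C.card := (Finset.card_le_card
          (erase_sdiff_block_subset hD hem hdisj hinv hline hij ha₁ ha₂ hb)).trans
            (Finset.card_union_le _ _)
      _ ≤ 2 * lam + C.card := by omega
  exact cast_le_of_add_eight_le_six_mul hl hn
    (add_eight_le_six_mul hl hk hn hD.twelve_dvd hout hC hC₂)

/-- Lemma: suppose the hole stabilizer `G = π_∞(Δ)` of a supersimple 2-(n,4,λ) design
is transitive on `Ω \ {∞}` but preserves a system of imprimitivity with `ℓ ≥ 2`
blocks of equal size. If some line `{a₁, a₂, b, ∞}` has `a₁, a₂` in the same block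
and `b` in a different block, then `n ≤ (ℓ/(ℓ-1))(6λ - 7 - 1/ℓ)`. -/
theorem holeStab_imprimitive_line_bound {Ω : Type*} [Fintype Ω] [DecidableEq Ω]
    (B : Finset (Finset Ω)) (n lam : ℕ)
    (hD : IsSupersimpleDesign B n lam)
    (em : Ω → Ω → Equiv.Perm Ω) (hem : IsElemMoves B em)
    (inf : Ω)
    (htrans : ∀ x y : Ω, x ≠ inf → y ≠ inf → ∃ g ∈ holeStab em inf, g x = y)
    (ℓ k : ℕ) (hl : 2 ≤ ℓ)
    (blocks : Fin ℓ → Finset Ω)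
    (hdisj : ∀ i j : Fin ℓ, i ≠ j → Disjoint (blocks i) (blocks j))
    (hcover : Finset.univ.biUnion blocks = Finset.univ.erase inf)
    (hsize : ∀ i : Fin ℓ, (blocks i).card = k)
    (hinv : ∀ g ∈ holeStab em inf, ∀ i : Fin ℓ, ∃ j : Fin ℓ,
      (blocks i).image g = blocks j)
    (a₁ a₂ b : Ω) (ha : a₁ ≠ a₂)
    (hline : ({a₁, a₂, b, inf} : Finset Ω) ∈ B)
    (i j : Fin ℓ) (hij : i ≠ j)
    (ha₁ : a₁ ∈ blocks i) (ha₂ : a₂ ∈ blocks i) (hb : b ∈ blocks j) :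
    (n : ℚ) ≤ ((ℓ : ℚ) / (ℓ - 1)) * (6 * lam - 7 - 1 / ℓ) :=
  holeStab_imprimitive_line_bound_general B n lam hD em hem inf ℓ k hl blocks hdisj hcover hsize
    hinv a₁ a₂ b ha hline i j hij ha₁ ha₂ hb
end

section
/- Let Δ be a supersimple 2-(n,4,λ) design with point ∞ and G = π_∞(Δ). If G is transitive and preserves a system of imprimitivity with exactly 2 blocks, then n ≤ 6λ + 3. -/
variable {Ω : Type*} [Fintype Ω] [DecidableEq Ω]

/-- set of moved points -/
def moved (g : Equiv.Perm Ω) : Finset Ω := Finset.univ.filter (fun z => g z ≠ z)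

lemma mem_moved {g : Equiv.Perm Ω} {z : Ω} : z ∈ moved g ↔ g z ≠ z := by
  simp [moved]

lemma moved_mul (g h : Equiv.Perm Ω) : moved (g * h) ⊆ moved g ∪ moved h := by
  intro z hz
  rw [mem_moved] at hz
  by_contra hc
  simp only [Finset.mem_union, mem_moved, not_or, not_not] at hc
  exact hz (by rw [Equiv.Perm.mul_apply, hc.2, hc.1])

def extraPts (B : Finset (Finset Ω)) (x y : Ω) : Finset Ω :=
  (B.filter fun L => x ∈ L ∧ y ∈ L).biUnion fun L => L \ {x, y}

lemma em_mul_em {B : Finset (Finset Ω)} {em : Ω → Ω → Equiv.Perm Ω}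
    (hem : IsElemMoves B em) (hL4 : ∀ L ∈ B, L.card = 4) (x y : Ω) :
    em y x * em x y = 1 := by
  obtain ⟨h1, h2⟩ := hem
  by_cases hxy : x = y
  · subst hxy; rw [h2 x x (Or.inl rfl)]; simp
  by_cases hc : Collin B x y
  · have hc' : Collin B y x := by
      obtain ⟨L, hL, hx, hy⟩ := hc; exact ⟨L, hL, hy, hx⟩
    obtain ⟨hxy1, hxy2, hxy3, hxy4⟩ := h1 x y hxy hc
    obtain ⟨hyx1, hyx2, hyx3, hyx4⟩ := h1 y x (Ne.symm hxy) hc'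
    ext z
    simp only [Equiv.Perm.mul_apply, Equiv.Perm.coe_one, id_eq]
    by_cases hzx : z = x
    · subst hzx; rw [hxy1, hyx1]
    by_cases hzy : z = y
    · subst hzy; rw [hxy2, hyx2]
    by_cases hL : ∃ L ∈ B, x ∈ L ∧ y ∈ L ∧ z ∈ L
    · obtain ⟨L, hLB, hxL, hyL, hzL⟩ := hL
      obtain ⟨hwL, hwz, hwx, hwy⟩ := hxy3 L hLB hxL hyL z hzL hzx hzy
      set w := em x y z with hw
      obtain ⟨hw'L, hw'w, hw'y, hw'x⟩ := hyx3 L hLB hyL hxL w hwL hwy hwx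
      -- L = {x,y,z,w}
      have hsub : ({x, y, z, w} : Finset Ω) ⊆ L := by
        intro v hv
        simp only [Finset.mem_insert, Finset.mem_singleton] at hv
        rcases hv with rfl | rfl | rfl | rfl <;> assumption
      have hcard4 : ({x, y, z, w} : Finset Ω).card = 4 := by
        rw [Finset.card_insert_of_notMem (by simp [hxy, Ne.symm hzx, Ne.symm hwx]),
          Finset.card_insert_of_notMem (by simp [Ne.symm hzy, Ne.symm hwy]),
          Finset.card_insert_of_notMem (by simp [Ne.symm hwz]), Finset.card_singleton]
      have hLeq : ({x, y, z, w} : Finset Ω) = L :=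
        Finset.eq_of_subset_of_card_le hsub (by rw [hL4 L hLB, hcard4])
      have : em y x w ∈ ({x, y, z, w} : Finset Ω) := by rw [hLeq]; exact hw'L
      simp only [Finset.mem_insert, Finset.mem_singleton] at this
      rcases this with h | h | h | h
      · exact absurd h hw'x
      · exact absurd h hw'y
      · exact h
      · exact absurd h hw'w
    · push_neg at hL
      rw [hxy4 z hzx hzy hL]
      exact hyx4 z hzy hzx (fun L hLB hy hx => hL L hLB hx hy)
  · have hc' : ¬ Collin B y x := by
      intro ⟨L, hL, hy, hx⟩; exact hc ⟨L, hL, hx, hy⟩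
    rw [h2 x y (Or.inr hc), h2 y x (Or.inr hc')]; simp

lemma em_ne_one {B : Finset (Finset Ω)} {em : Ω → Ω → Equiv.Perm Ω}
    (hem : IsElemMoves B em) {x y : Ω} (h : em x y ≠ 1) :
    x ≠ y ∧ Collin B x y := by
  by_contra hc
  push_neg at hc
  rcases eq_or_ne x y with h' | h'
  · exact h (hem.2 x y (Or.inl h'))
  · exact h (hem.2 x y (Or.inr (hc h')))

lemma moved_em_subset {B : Finset (Finset Ω)} {em : Ω → Ω → Equiv.Perm Ω}
    (hem : IsElemMoves B em) (x y : Ω) :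
    moved (em x y) ⊆ insert x (insert y (extraPts B x y)) := by
  intro z hz
  rw [mem_moved] at hz
  have hne : em x y ≠ 1 := by rintro h; rw [h] at hz; exact hz rfl
  obtain ⟨hxy, hc⟩ := em_ne_one hem hne
  by_cases hzx : z = x
  · subst hzx; exact Finset.mem_insert_self _ _
  by_cases hzy : z = y
  · subst hzy; exact Finset.mem_insert_of_mem (Finset.mem_insert_self _ _)
  have hL : ∃ L ∈ B, x ∈ L ∧ y ∈ L ∧ z ∈ L := by
    by_contra hno
    push_neg at hno
    exact hz ((hem.1 x y hxy hc).2.2.2 z hzx hzy hno)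
  obtain ⟨L, hLB, hxL, hyL, hzL⟩ := hL
  refine Finset.mem_insert_of_mem (Finset.mem_insert_of_mem ?_)
  refine Finset.mem_biUnion.mpr ⟨L, Finset.mem_filter.mpr ⟨hLB, hxL, hyL⟩, ?_⟩
  simp [hzL, hzx, hzy]

lemma extraPts_card {B : Finset (Finset Ω)} {lam : ℕ}
    (hL4 : ∀ L ∈ B, L.card = 4)
    (hpair : ∀ a b : Ω, a ≠ b → (B.filter fun L => a ∈ L ∧ b ∈ L).card = lam)
    {x y : Ω} (hxy : x ≠ y) :
    (extraPts B x y).card ≤ 2 * lam := by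
  refine le_trans (Finset.card_biUnion_le) ?_
  have h2 : ∀ L ∈ B.filter (fun L => x ∈ L ∧ y ∈ L), (L \ {x, y}).card ≤ 2 := by
    intro L hL
    rw [Finset.mem_filter] at hL
    have hsub : ({x, y} : Finset Ω) ⊆ L := by
      intro v hv
      simp only [Finset.mem_insert, Finset.mem_singleton] at hv
      rcases hv with rfl | rfl
      · exact hL.2.1
      · exact hL.2.2
    rw [Finset.card_sdiff_of_subset hsub, hL4 L hL.1, Finset.card_pair hxy]
  calc ∑ L ∈ B.filter (fun L => x ∈ L ∧ y ∈ L), (L \ {x, y}).card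
      ≤ (B.filter (fun L => x ∈ L ∧ y ∈ L)).card * 2 :=
        Finset.sum_le_card_nsmul _ _ 2 h2
    _ = 2 * lam := by rw [hpair x y hxy]; ring

lemma moved_em_card {B : Finset (Finset Ω)} {em : Ω → Ω → Equiv.Perm Ω} {lam : ℕ}
    (hem : IsElemMoves B em)
    (hL4 : ∀ L ∈ B, L.card = 4)
    (hpair : ∀ a b : Ω, a ≠ b → (B.filter fun L => a ∈ L ∧ b ∈ L).card = lam)
    (x y : Ω) : (moved (em x y)).card ≤ 2 * lam + 2 := by
  by_cases h : em x y = 1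
  · rw [h]
    have : moved (1 : Equiv.Perm Ω) = ∅ := by
      ext z; simp [mem_moved]
    rw [this]; simp
  · obtain ⟨hxy, _⟩ := em_ne_one hem h
    calc (moved (em x y)).card ≤ (insert x (insert y (extraPts B x y))).card :=
          Finset.card_le_card (moved_em_subset hem x y)
      _ ≤ (insert y (extraPts B x y)).card + 1 := Finset.card_insert_le _ _
      _ ≤ (extraPts B x y).card + 1 + 1 := by
          have := Finset.card_insert_le y (extraPts B x y); omega
      _ ≤ 2 * lam + 2 := by have := extraPts_card hL4 hpair hxy; omega

def finsetStab (s : Finset Ω) : Subgroup (Equiv.Perm Ω) where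
  carrier := {g | s.image g = s}
  one_mem' := by simp
  mul_mem' := by
    intro g h hg hh
    show s.image ⇑(g * h) = s
    have hg' : s.image ⇑g = s := hg
    have hh' : s.image ⇑h = s := hh
    rw [Equiv.Perm.coe_mul, ← Finset.image_image, hh', hg']
  inv_mem' := by
    intro g hg
    show s.image ⇑g⁻¹ = s
    have hg' : s.image ⇑g = s := hg
    conv_lhs => rw [← hg']
    rw [Finset.image_image]
    have : ⇑g⁻¹ ∘ ⇑g = id := by ext z; simp
    rw [this, Finset.image_id]

lemma mem_finsetStab {s : Finset Ω} {g : Equiv.Perm Ω} :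
    g ∈ finsetStab s ↔ s.image ⇑g = s := Iff.rfl

/-- Lemma: if the hole stabilizer `G = π_∞(Δ)` of a supersimple 2-(n,4,λ) design is
transitive on `Ω \ {∞}` and preserves a system of imprimitivity with exactly `2`
blocks, then `n ≤ 6λ + 3`. -/
theorem holeStab_two_blocks_bound {Ω : Type*} [Fintype Ω] [DecidableEq Ω]
    (B : Finset (Finset Ω)) (n lam : ℕ)
    (hD : IsSupersimpleDesign B n lam)
    (em : Ω → Ω → Equiv.Perm Ω) (hem : IsElemMoves B em)
    (inf : Ω)
    (htrans : ∀ x y : Ω, x ≠ inf → y ≠ inf → ∃ g ∈ holeStab em inf, g x = y)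
    (blocks : Fin 2 → Finset Ω)
    (hdisj : ∀ i j : Fin 2, i ≠ j → Disjoint (blocks i) (blocks j))
    (hcover : Finset.univ.biUnion blocks = Finset.univ.erase inf)
    (hsize : ∀ i : Fin 2, (blocks i).card = (n - 1) / 2)
    (hnontriv : 1 < (n - 1) / 2)
    (hinv : ∀ g ∈ holeStab em inf, ∀ i : Fin 2, ∃ j : Fin 2,
      (blocks i).image g = blocks j) :
    n ≤ 6 * lam + 3 := by
  classical
  obtain ⟨hn, hL4, hpair, _⟩ := hD
  have hcard_erase : (Finset.univ.erase inf).card = n - 1 := by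
    rw [Finset.card_erase_of_mem (Finset.mem_univ inf), Finset.card_univ, hn]
  have hn1 : 1 ≤ n := by
    have : 0 < Fintype.card Ω := Fintype.card_pos_iff.mpr ⟨inf⟩
    omega
  have hblocksum : (n - 1) / 2 + (n - 1) / 2 = n - 1 := by
    have h1 : (Finset.univ.biUnion blocks).card = ∑ i, (blocks i).card :=
      Finset.card_biUnion (fun i _ j _ hij => hdisj i j hij)
    rw [hcover, hcard_erase] at h1
    rw [Fin.sum_univ_two, hsize 0, hsize 1] at h1
    omega
  have hbne : ∀ i, (blocks i).Nonempty := by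
    intro i
    rw [← Finset.card_pos, hsize]
    omega
  have hbsub : ∀ i, blocks i ⊆ Finset.univ.erase inf := by
    intro i x hx
    rw [← hcover]
    exact Finset.mem_biUnion.mpr ⟨i, Finset.mem_univ i, hx⟩
  have h01 : (0 : Fin 2) ≠ 1 := by decide
  have hb0ne1 : blocks 0 ≠ blocks 1 := by
    intro h
    obtain ⟨x, hx⟩ := hbne 0
    exact Finset.disjoint_left.mp (hdisj 0 1 h01) hx (h ▸ hx)
  -- the lam = 0 case is degenerate
  rcases Nat.eq_zero_or_pos lam with hlam0 | hlam
  · exfalso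
    have hall1 : ∀ x y : Ω, em x y = 1 := by
      intro x y
      rcases eq_or_ne x y with h | h
      · exact hem.2 x y (Or.inl h)
      · refine hem.2 x y (Or.inr ?_)
        rintro ⟨L, hL, hx, hy⟩
        have hmem : L ∈ B.filter (fun L => x ∈ L ∧ y ∈ L) :=
          Finset.mem_filter.mpr ⟨hL, hx, hy⟩
        have hcard := hpair x y h
        rw [hlam0, Finset.card_eq_zero] at hcard
        rw [hcard] at hmem
        exact absurd hmem (Finset.notMem_empty L)
    have hms : ∀ l : List Ω, moveSeq em l = 1 := by
      intro l
      induction l with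
      | nil => rfl
      | cons x l ih =>
        cases l with
        | nil => rfl
        | cons y l' =>
          show em x y * moveSeq em (y :: l') = 1
          rw [hall1, ih, one_mul]
    obtain ⟨x, hx, y, hy, hxy⟩ := Finset.one_lt_card.mp (by rw [hsize 0]; exact hnontriv)
    obtain ⟨g, hg, hgxy⟩ := htrans x y (Finset.ne_of_mem_erase (hbsub 0 hx))
      (Finset.ne_of_mem_erase (hbsub 0 hy))
    have hbot : holeStab em inf ≤ ⊥ := by
      apply (Subgroup.closure_le _).mpr
      rintro g ⟨l, rfl⟩
      rw [SetLike.mem_coe, Subgroup.mem_bot]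
      exact hms _
    rw [Subgroup.mem_bot.mp (hbot hg)] at hgxy
    exact hxy hgxy
  -- find an element of the hole stabilizer swapping the two blocks
  obtain ⟨u, hu⟩ := hbne 0
  obtain ⟨v, hv⟩ := hbne 1
  obtain ⟨g, hg, hguv⟩ := htrans u v (Finset.ne_of_mem_erase (hbsub 0 hu))
    (Finset.ne_of_mem_erase (hbsub 1 hv))
  have hgswap : (blocks 0).image ⇑g = blocks 1 := by
    obtain ⟨j, hj⟩ := hinv g hg 0
    have hvj : v ∈ blocks j := by
      rw [← hj, ← hguv]
      exact Finset.mem_image_of_mem _ hu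
    fin_cases j
    · exact absurd hvj (Finset.disjoint_left.mp (hdisj 1 0 h01.symm) hv)
    · exact hj
  -- the hole stabilizer is contained in the closure of the short generators
  set T : Set (Equiv.Perm Ω) := {t | ∃ a b : Ω, t = em inf a * em a b * em b inf} with hTdef
  have hTS : T ⊆ {g | ∃ l : List Ω, g = moveSeq em (inf :: (l ++ [inf]))} := by
    rintro t ⟨a, b, rfl⟩
    refine ⟨[a, b], ?_⟩
    show em inf a * em a b * em b inf = em inf a * (em a b * (em b inf * moveSeq em [inf]))
    show em inf a * em a b * em b inf = em inf a * (em a b * (em b inf * 1))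
    rw [mul_one, mul_assoc]
  have hGT : holeStab em inf ≤ Subgroup.closure T := by
    apply (Subgroup.closure_le _).mpr
    rintro g ⟨l, rfl⟩
    rw [SetLike.mem_coe]
    have key : ∀ (l : List Ω) (a : Ω),
        em inf a * moveSeq em (a :: (l ++ [inf])) ∈ Subgroup.closure T := by
      intro l
      induction l with
      | nil =>
        intro a
        show em inf a * (em a inf * moveSeq em [inf]) ∈ _
        show em inf a * (em a inf * 1) ∈ _
        rw [mul_one, em_mul_em hem hL4 a inf]
        exact one_mem _
      | cons b l ih =>
        intro a
        have h1 : em b inf * em inf b = 1 := em_mul_em hem hL4 inf b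
        have heq : em inf a * moveSeq em (a :: ((b :: l) ++ [inf]))
            = (em inf a * em a b * em b inf) * (em inf b * moveSeq em (b :: (l ++ [inf]))) := by
          show em inf a * (em a b * moveSeq em (b :: (l ++ [inf]))) = _
          rw [mul_assoc (em inf a * em a b), ← mul_assoc (em b inf), h1, one_mul, mul_assoc]
        rw [heq]
        exact mul_mem (Subgroup.subset_closure ⟨a, b, rfl⟩) (ih b)
    cases l with
    | nil =>
      show moveSeq em [inf, inf] ∈ _
      show em inf inf * moveSeq em [inf] ∈ _
      rw [hem.2 inf inf (Or.inl rfl), one_mul]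
      show (1 : Equiv.Perm Ω) ∈ _
      exact one_mem _
    | cons a l' =>
      show em inf a * moveSeq em (a :: (l' ++ [inf])) ∈ _
      exact key l' a
  -- some short generator must move block 0 to block 1
  have hstab : ¬ ∀ t ∈ T, (blocks 0).image ⇑t = blocks 0 := by
    intro hall
    have hle : Subgroup.closure T ≤ finsetStab (blocks 0) :=
      (Subgroup.closure_le _).mpr (fun t ht => hall t ht)
    have := mem_finsetStab.mp (hle (hGT hg))
    rw [this] at hgswap
    exact hb0ne1 hgswap
  push_neg at hstab
  obtain ⟨t, htT, htne⟩ := hstab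
  have htG : t ∈ holeStab em inf := Subgroup.subset_closure (hTS htT)
  have ht0 : (blocks 0).image ⇑t = blocks 1 := by
    obtain ⟨j, hj⟩ := hinv t htG 0
    fin_cases j
    · exact absurd hj htne
    · exact hj
  have ht1 : (blocks 1).image ⇑t = blocks 0 := by
    obtain ⟨j, hj⟩ := hinv t htG 1
    fin_cases j
    · exact hj
    · exfalso
      have himinj : Function.Injective (Finset.image ⇑t) :=
        Finset.image_injective t.injective
      exact hb0ne1 (himinj (ht0.trans hj.symm))
  -- every point of both blocks is moved by t
  have hsubm : blocks 0 ∪ blocks 1 ⊆ moved t := by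
    intro x hx
    rw [mem_moved]
    rcases Finset.mem_union.mp hx with h | h
    · intro hfix
      have hx1 : t x ∈ blocks 1 := by
        rw [← ht0]; exact Finset.mem_image_of_mem _ h
      rw [hfix] at hx1
      exact Finset.disjoint_left.mp (hdisj 0 1 h01) h hx1
    · intro hfix
      have hx0 : t x ∈ blocks 0 := by
        rw [← ht1]; exact Finset.mem_image_of_mem _ h
      rw [hfix] at hx0
      exact Finset.disjoint_left.mp (hdisj 1 0 h01.symm) h hx0
  have hcard_low : n - 1 ≤ (moved t).card := by
    have hcu : (blocks 0 ∪ blocks 1).card = n - 1 := by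
      rw [Finset.card_union_of_disjoint (hdisj 0 1 h01), hsize 0, hsize 1]
      omega
    rw [← hcu]
    exact Finset.card_le_card hsubm
  -- upper bound on the support of t
  obtain ⟨a, b, hab⟩ := htT
  subst hab
  have hup : (moved (em inf a * em a b * em b inf)).card ≤ 6 * lam + 2 := by
    have hmb : ∀ x y : Ω, (moved (em x y)).card ≤ 2 * lam + 2 :=
      fun x y => moved_em_card hem hL4 hpair x y
    have htwo : ∀ g h : Equiv.Perm Ω, (moved (g * h)).card ≤
        (moved g).card + (moved h).card := by
      intro g h
      calc (moved (g * h)).card ≤ (moved g ∪ moved h).card :=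
            Finset.card_le_card (moved_mul g h)
        _ ≤ (moved g).card + (moved h).card := Finset.card_union_le _ _
    by_cases h1 : em inf a = 1
    · rw [h1, one_mul]
      have := htwo (em a b) (em b inf)
      have := hmb a b
      have := hmb b inf
      omega
    by_cases h2 : em a b = 1
    · rw [h2, mul_one]
      have := htwo (em inf a) (em b inf)
      have := hmb inf a
      have := hmb b inf
      omega
    by_cases h3 : em b inf = 1
    · rw [h3, mul_one]
      have := htwo (em inf a) (em a b)
      have := hmb inf a
      have := hmb a b
      omega
    · -- all three elementary moves nontrivial
      obtain ⟨hia, hiac⟩ := em_ne_one hem h1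
      obtain ⟨hab', habc⟩ := em_ne_one hem h2
      obtain ⟨hbi, hbic⟩ := em_ne_one hem h3
      have hfix : (em inf a * em a b * em b inf) inf = inf := by
        have e1 := (hem.1 b inf hbi hbic).2.1
        have e2 := (hem.1 a b hab' habc).2.1
        have e3 := (hem.1 inf a hia hiac).2.1
        simp only [Equiv.Perm.mul_apply, e1, e2, e3]
      set U : Finset Ω := insert inf (insert a (insert b
        (extraPts B inf a ∪ extraPts B a b ∪ extraPts B b inf))) with hU
      have hUsub : moved (em inf a * em a b * em b inf) ⊆ U.erase inf := by
        intro z hz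
        have hzinf : z ≠ inf := by
          rintro rfl
          exact (mem_moved.mp hz) hfix
        refine Finset.mem_erase.mpr ⟨hzinf, ?_⟩
        have hz3 := moved_mul (em inf a * em a b) (em b inf) hz
        rcases Finset.mem_union.mp hz3 with hz' | hz'
        · rcases Finset.mem_union.mp (moved_mul (em inf a) (em a b) hz') with hz'' | hz''
          · have := moved_em_subset hem inf a hz''
            simp only [hU, Finset.mem_insert, Finset.mem_union] at this ⊢
            tauto
          · have := moved_em_subset hem a b hz''
            simp only [hU, Finset.mem_insert, Finset.mem_union] at this ⊢
            tauto
        · have := moved_em_subset hem b inf hz'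
          simp only [hU, Finset.mem_insert, Finset.mem_union] at this ⊢
          tauto
      have hUcard : U.card ≤ 6 * lam + 3 := by
        have e1 := extraPts_card hL4 hpair hia
        have e2 := extraPts_card hL4 hpair hab'
        have e3 := extraPts_card hL4 hpair hbi
        have hu1 : (extraPts B inf a ∪ extraPts B a b ∪ extraPts B b inf).card ≤ 6 * lam := by
          have := Finset.card_union_le (extraPts B inf a ∪ extraPts B a b) (extraPts B b inf)
          have := Finset.card_union_le (extraPts B inf a) (extraPts B a b)
          omega
        have i1 := Finset.card_insert_le b
          (extraPts B inf a ∪ extraPts B a b ∪ extraPts B b inf)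
        have i2 := Finset.card_insert_le a (insert b
          (extraPts B inf a ∪ extraPts B a b ∪ extraPts B b inf))
        have i3 := Finset.card_insert_le inf (insert a (insert b
          (extraPts B inf a ∪ extraPts B a b ∪ extraPts B b inf)))
        rw [hU]
        omega
      have hUe : (U.erase inf).card = U.card - 1 :=
        Finset.card_erase_of_mem (Finset.mem_insert_self _ _)
      have := Finset.card_le_card hUsub
      omega
  omega
end

section
/- Consider G = Sym(ℓ) ≀ Sym(r) acting in the product action on the set of functions from an r-element set Δ to an ℓ-element set Γ (a set of size ℓ^r). If g = bh ∈ G with b ∈ Sym(ℓ)^r and h ∈ Sym(r), h ≠ 1, then g fixes at most ℓ^{r-1} functions. -/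
/-- In the product action of `Sym(ℓ) ≀ Sym(r)` on the `ℓ^r` functions `Fin r → Fin ℓ`
(given by `α^{(b,h)} i = b_{h⁻¹ i} (α (h⁻¹ i))`), an element `bh` with `h ≠ 1`
fixes at most `ℓ^(r-1)` functions. -/
theorem product_action_fixed_points (ℓ r : ℕ)
    (b : Fin r → Equiv.Perm (Fin ℓ)) (h : Equiv.Perm (Fin r)) (hh : h ≠ 1) :
    (Finset.univ.filter fun α : Fin r → Fin ℓ =>
        (fun i => b (h⁻¹ i) (α (h⁻¹ i))) = α).card ≤ ℓ ^ (r - 1) := by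
  obtain ⟨j, hj⟩ : ∃ j, h j ≠ j := by
    by_contra hc
    push_neg at hc
    exact hh (Equiv.ext hc)
  have key : ∀ α ∈ (Finset.univ.filter fun α : Fin r → Fin ℓ =>
      (fun i => b (h⁻¹ i) (α (h⁻¹ i))) = α), α (h j) = b j (α j) := by
    intro α hα
    simp only [Finset.mem_filter] at hα
    have := congrFun hα.2 (h j)
    simpa using this.symm
  have hinj : Set.InjOn (fun α : Fin r → Fin ℓ => fun x : {x : Fin r // x ≠ h j} => α x)
      ((Finset.univ.filter fun α : Fin r → Fin ℓ =>
        (fun i => b (h⁻¹ i) (α (h⁻¹ i))) = α) : Finset _) := by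
    intro α₁ h₁ α₂ h₂ heq
    funext x
    by_cases hx : x = h j
    · subst hx
      rw [key α₁ h₁, key α₂ h₂]
      have : α₁ j = α₂ j := congrFun heq ⟨j, fun e => hj e.symm⟩
      rw [this]
    · exact congrFun heq ⟨x, hx⟩
  calc (Finset.univ.filter fun α : Fin r → Fin ℓ =>
        (fun i => b (h⁻¹ i) (α (h⁻¹ i))) = α).card
      ≤ (Finset.univ : Finset ({x : Fin r // x ≠ h j} → Fin ℓ)).card :=
        Finset.card_le_card_of_injOn _ (fun _ _ => Finset.mem_univ _) hinj
    _ = ℓ ^ (r - 1) := by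
        simp [Finset.card_univ, Fintype.card_fun]
end

section
/- Let m ≥ 4, 2 ≤ k ≤ ⌊m/2⌋, and let g ∈ Sym(m) map 1 to 2. Then the number of k-subsets S of {1,…,m} with S^g ≠ S is at least 2·C(m-2, k-1). -/
open Finset

lemma kset_count_aux (m k : ℕ) (hk : 1 ≤ k) (x y : Fin m) (hxy : x ≠ y) :
    (Finset.univ.filter fun S : Finset (Fin m) => S.card = k ∧ x ∈ S ∧ y ∉ S).card =
      Nat.choose (m - 2) (k - 1) := by
  have hcard : (((Finset.univ : Finset (Fin m)).erase y).erase x).card = m - 2 := by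
    rw [Finset.card_erase_of_mem (by simp [hxy]), Finset.card_erase_of_mem (by simp)]
    simp [Finset.card_univ]; omega
  rw [← hcard, ← Finset.card_powersetCard (k - 1)]
  apply Finset.card_bij (fun S _ => S.erase x)
  · intro S hS
    simp only [Finset.mem_filter, Finset.mem_univ, true_and] at hS
    obtain ⟨hSk, hxS, hyS⟩ := hS
    rw [Finset.mem_powersetCard]
    constructor
    · intro z hz
      simp only [Finset.mem_erase] at hz ⊢
      exact ⟨hz.1, fun h => hyS (h ▸ hz.2), Finset.mem_univ z⟩
    · rw [Finset.card_erase_of_mem hxS, hSk]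
  · intro S hS T hT h
    simp only [Finset.mem_filter, Finset.mem_univ, true_and] at hS hT
    have : insert x (S.erase x) = insert x (T.erase x) := by rw [h]
    rwa [Finset.insert_erase hS.2.1, Finset.insert_erase hT.2.1] at this
  · intro T hT
    rw [Finset.mem_powersetCard] at hT
    obtain ⟨hsub, hcardT⟩ := hT
    have hxT : x ∉ T := fun h => (Finset.mem_erase.mp (hsub h)).1 rfl
    have hyT : y ∉ T := fun h => (Finset.mem_erase.mp (Finset.mem_of_mem_erase (hsub h))).1 rfl
    refine ⟨insert x T, ?_, ?_⟩
    · simp only [Finset.mem_filter, Finset.mem_univ, true_and]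
      refine ⟨?_, Finset.mem_insert_self x T, ?_⟩
      · rw [Finset.card_insert_of_notMem hxT, hcardT]
        omega
      · simp only [Finset.mem_insert]
        push_neg
        exact ⟨fun h => hxy h.symm, hyT⟩
    · rw [Finset.erase_insert hxT]

/-- Let `m ≥ 4`, `2 ≤ k ≤ ⌊m/2⌋`, and let `g ∈ Sym(m)` map a point `a` to a
different point `b` (e.g. `1` to `2`). Then `g` moves at least `2·C(m-2, k-1)` of
the `k`-subsets of the `m`-element set. -/
theorem kset_moved_lower_bound (m k : ℕ) (hm : 4 ≤ m) (hk2 : 2 ≤ k)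
    (hkm : 2 * k ≤ m) (g : Equiv.Perm (Fin m)) (a b : Fin m) (hab : a ≠ b)
    (hg : g a = b) :
    2 * Nat.choose (m - 2) (k - 1) ≤
      (Finset.univ.filter fun S : Finset (Fin m) =>
        S.card = k ∧ S.image g ≠ S).card := by
  have hbgb : b ≠ g b := by
    intro h
    exact hab (g.injective (hg.trans h))
  set A := Finset.univ.filter fun S : Finset (Fin m) => S.card = k ∧ a ∈ S ∧ b ∉ S with hA
  set B := Finset.univ.filter fun S : Finset (Fin m) => S.card = k ∧ b ∈ S ∧ g b ∉ S with hB
  have hAcard : A.card = Nat.choose (m - 2) (k - 1) := kset_count_aux m k (by omega) a b hab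
  have hBcard : B.card = Nat.choose (m - 2) (k - 1) := kset_count_aux m k (by omega) b (g b) hbgb
  have hdisj : Disjoint A B := by
    rw [Finset.disjoint_left]
    intro S hSA hSB
    simp only [hA, hB, Finset.mem_filter] at hSA hSB
    exact hSA.2.2.2 hSB.2.2.1
  have hsub : A ∪ B ⊆ Finset.univ.filter fun S : Finset (Fin m) =>
      S.card = k ∧ S.image g ≠ S := by
    intro S hS
    simp only [Finset.mem_union, hA, hB, Finset.mem_filter, Finset.mem_univ, true_and] at hS ⊢
    rcases hS with ⟨hk, haS, hbS⟩ | ⟨hk, hbS, hgbS⟩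
    · refine ⟨hk, fun h => hbS ?_⟩
      rw [← h]
      exact Finset.mem_image.mpr ⟨a, haS, hg⟩
    · refine ⟨hk, fun h => hgbS ?_⟩
      rw [← h]
      exact Finset.mem_image.mpr ⟨b, hbS, rfl⟩
  calc 2 * Nat.choose (m - 2) (k - 1) = A.card + B.card := by rw [hAcard, hBcard]; ring
    _ = (A ∪ B).card := (Finset.card_union_of_disjoint hdisj).symm
    _ ≤ _ := Finset.card_le_card hsub
end
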